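/- arXiv:2304.00710 — 5 statements merged into one kernel-verified Lean document; each statement's English description precedes it below -/
import Mathlib

section
/- Let d, m, l be natural numbers with d ≥ 1, m ≥ 1 and l ≥ m, and let R be an invertible d^m × d^m complex matrix that satisfies the (d,m,l)-generalized Yang–Baxter equation. Then R is a scalar multiple of the identity matrix: there exists a nonzero complex number λ such that R = λ·I, where I is the d^m × d^m identity matrix. -/
open Matrix
open scoped Kronecker

/-- `R ⊗ I_d^{⊗ l}` as a `d^(m+l) × d^(m+l)` matrix, with indices identified via the
canonical (big-endian digit concatenation) reindexing. -/
noncomputable def gybeLeft (d m l : ℕ) (R : Matrix (Fin (d ^ m)) (Fin (d ^ m)) ℂ) :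
    Matrix (Fin (d ^ (m + l))) (Fin (d ^ (m + l))) ℂ :=
  Matrix.reindex (finProdFinEquiv.trans (finCongr (pow_add d m l).symm))
    (finProdFinEquiv.trans (finCongr (pow_add d m l).symm))
    (R ⊗ₖ (1 : Matrix (Fin (d ^ l)) (Fin (d ^ l)) ℂ))

/-- `I_d^{⊗ l} ⊗ R` as a `d^(m+l) × d^(m+l)` matrix. -/
noncomputable def gybeRight (d m l : ℕ) (R : Matrix (Fin (d ^ m)) (Fin (d ^ m)) ℂ) :
    Matrix (Fin (d ^ (m + l))) (Fin (d ^ (m + l))) ℂ :=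
  Matrix.reindex
    (finProdFinEquiv.trans (finCongr (by rw [← pow_add, add_comm] : d ^ l * d ^ m = d ^ (m + l))))
    (finProdFinEquiv.trans (finCongr (by rw [← pow_add, add_comm] : d ^ l * d ^ m = d ^ (m + l))))
    ((1 : Matrix (Fin (d ^ l)) (Fin (d ^ l)) ℂ) ⊗ₖ R)

/-- The `(d,m,l)`-generalized Yang–Baxter equation. -/
def gYBE (d m l : ℕ) (R : Matrix (Fin (d ^ m)) (Fin (d ^ m)) ℂ) : Prop :=
  gybeLeft d m l R * gybeRight d m l R * gybeLeft d m l R =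
    gybeRight d m l R * gybeLeft d m l R * gybeRight d m l R

theorem my_reindex_reindex {α : Type*} {m n l o l₂ o₂ : Type*} (e₁ : m ≃ l) (e₂ : n ≃ o)
    (e₃ : l ≃ l₂) (e₄ : o ≃ o₂) (M : Matrix m n α) :
    Matrix.reindex e₃ e₄ (Matrix.reindex e₁ e₂ M) =
      Matrix.reindex (e₁.trans e₃) (e₂.trans e₄) M := by
  simp [Matrix.reindex_apply, Matrix.submatrix_submatrix]

/-- auxiliary: the common reindexing equivalence -/
def gybeE (d m k : ℕ) :
    (Fin (d ^ m) × (Fin (d ^ k) × Fin (d ^ m))) ≃ Fin (d ^ (m + (m + k))) :=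
  (Equiv.prodCongr (Equiv.refl (Fin (d ^ m)))
      (finProdFinEquiv.trans
        (finCongr (by rw [← pow_add, add_comm] : d ^ k * d ^ m = d ^ (m + k))))).trans
    (finProdFinEquiv.trans (finCongr (pow_add d m (m + k)).symm))

theorem gybeLeft_eq (d m k : ℕ) (R : Matrix (Fin (d ^ m)) (Fin (d ^ m)) ℂ) :
    gybeLeft d m (m + k) R =
      Matrix.reindex (gybeE d m k) (gybeE d m k)
        (R ⊗ₖ ((1 : Matrix (Fin (d ^ k)) (Fin (d ^ k)) ℂ) ⊗ₖ
          (1 : Matrix (Fin (d ^ m)) (Fin (d ^ m)) ℂ))) := by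
  set f : Fin (d ^ k) × Fin (d ^ m) ≃ Fin (d ^ (m + k)) :=
    finProdFinEquiv.trans (finCongr (by rw [← pow_add, add_comm] : d ^ k * d ^ m = d ^ (m + k)))
    with hf
  have h1 : (1 : Matrix (Fin (d ^ (m + k))) (Fin (d ^ (m + k))) ℂ) =
      Matrix.reindex f f ((1 : Matrix (Fin (d ^ k)) (Fin (d ^ k)) ℂ) ⊗ₖ 1) := by
    rw [one_kronecker_one]
    simp [Matrix.reindex_apply, Matrix.submatrix_one_equiv]
  rw [gybeLeft, h1, kroneckerMap_reindex_right, my_reindex_reindex]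
  rfl

theorem gybeE_eq (d m k : ℕ) :
    ((Equiv.prodAssoc (Fin (d ^ m)) (Fin (d ^ k)) (Fin (d ^ m))).symm.trans
      (((finProdFinEquiv.trans (finCongr (pow_add d m k).symm)).prodCongr
          (Equiv.refl (Fin (d ^ m)))).trans
        (finProdFinEquiv.trans
          (finCongr (by rw [← pow_add, add_comm] :
            d ^ (m + k) * d ^ m = d ^ (m + (m + k))))))) = gybeE d m k := by
  apply Equiv.ext
  rintro ⟨a, b, c⟩
  apply Fin.ext
  simp [gybeE, Equiv.prodAssoc, finProdFinEquiv, finCongr]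
  simp [pow_add]
  ring

theorem gybeRight_eq (d m k : ℕ) (R : Matrix (Fin (d ^ m)) (Fin (d ^ m)) ℂ) :
    gybeRight d m (m + k) R =
      Matrix.reindex (gybeE d m k) (gybeE d m k)
        ((1 : Matrix (Fin (d ^ m)) (Fin (d ^ m)) ℂ) ⊗ₖ
          ((1 : Matrix (Fin (d ^ k)) (Fin (d ^ k)) ℂ) ⊗ₖ R)) := by
  set g : Fin (d ^ m) × Fin (d ^ k) ≃ Fin (d ^ (m + k)) :=
    finProdFinEquiv.trans (finCongr (pow_add d m k).symm) with hg
  have h1 : (1 : Matrix (Fin (d ^ (m + k))) (Fin (d ^ (m + k))) ℂ) =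
      Matrix.reindex g g ((1 : Matrix (Fin (d ^ m)) (Fin (d ^ m)) ℂ) ⊗ₖ 1) := by
    rw [one_kronecker_one]
    simp [Matrix.reindex_apply, Matrix.submatrix_one_equiv]
  have h2 : ((1 : Matrix (Fin (d ^ m)) (Fin (d ^ m)) ℂ) ⊗ₖ
        (1 : Matrix (Fin (d ^ k)) (Fin (d ^ k)) ℂ)) ⊗ₖ R =
      Matrix.reindex (Equiv.prodAssoc _ _ _).symm (Equiv.prodAssoc _ _ _).symm
        ((1 : Matrix (Fin (d ^ m)) (Fin (d ^ m)) ℂ) ⊗ₖ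
          ((1 : Matrix (Fin (d ^ k)) (Fin (d ^ k)) ℂ) ⊗ₖ R)) := by
    rw [← kronecker_assoc, my_reindex_reindex]
    simp
  rw [gybeRight, h1, kroneckerMap_reindex_left, my_reindex_reindex, h2, my_reindex_reindex,
    gybeE_eq]

/-- For `l ≥ m` (and `d, m ≥ 1`), every invertible solution of the `(d,m,l)`-gYBE is a
nonzero scalar multiple of the identity matrix. -/
theorem gYBE_scalar_of_le (d m l : ℕ) (hd : 1 ≤ d) (hm : 1 ≤ m) (hlm : m ≤ l)
    (R : Matrix (Fin (d ^ m)) (Fin (d ^ m)) ℂ) (hR : IsUnit R) (h : gYBE d m l R) :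
    ∃ lam : ℂ, lam ≠ 0 ∧ R = lam • (1 : Matrix (Fin (d ^ m)) (Fin (d ^ m)) ℂ) := by
  obtain ⟨k, rfl⟩ : ∃ k, l = m + k := ⟨l - m, (Nat.add_sub_cancel' hlm).symm⟩
  haveI : NeZero (d ^ m) := ⟨by positivity⟩
  haveI : NeZero (d ^ k) := ⟨by positivity⟩
  set A := gybeLeft d m (m + k) R with hA
  set B := gybeRight d m (m + k) R with hB
  have hRdet : IsUnit R.det := (Matrix.isUnit_iff_isUnit_det R).mp hR
  have hAu : IsUnit A := by
    rw [Matrix.isUnit_iff_isUnit_det, hA, gybeLeft_eq, Matrix.det_reindex_self,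
      one_kronecker_one, Matrix.det_kronecker, Matrix.det_one, one_pow, mul_one]
    exact hRdet.pow _
  have hBu : IsUnit B := by
    rw [Matrix.isUnit_iff_isUnit_det, hB, gybeRight_eq, Matrix.det_reindex_self,
      Matrix.det_kronecker, Matrix.det_kronecker, Matrix.det_one, one_pow, one_mul,
      Matrix.det_one, one_pow, one_mul]
    exact (hRdet.pow _).pow _
  have hk : (R ⊗ₖ ((1 : Matrix (Fin (d ^ k)) (Fin (d ^ k)) ℂ) ⊗ₖ
        (1 : Matrix (Fin (d ^ m)) (Fin (d ^ m)) ℂ))) *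
      ((1 : Matrix (Fin (d ^ m)) (Fin (d ^ m)) ℂ) ⊗ₖ
        ((1 : Matrix (Fin (d ^ k)) (Fin (d ^ k)) ℂ) ⊗ₖ R)) =
      ((1 : Matrix (Fin (d ^ m)) (Fin (d ^ m)) ℂ) ⊗ₖ
        ((1 : Matrix (Fin (d ^ k)) (Fin (d ^ k)) ℂ) ⊗ₖ R)) *
      (R ⊗ₖ ((1 : Matrix (Fin (d ^ k)) (Fin (d ^ k)) ℂ) ⊗ₖ
        (1 : Matrix (Fin (d ^ m)) (Fin (d ^ m)) ℂ))) := by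
    rw [← Matrix.mul_kronecker_mul, ← Matrix.mul_kronecker_mul, ← Matrix.mul_kronecker_mul,
      ← Matrix.mul_kronecker_mul]
    simp
  have hcomm : A * B = B * A := by
    rw [hA, hB, gybeLeft_eq, gybeRight_eq]
    have h2 := congrArg (Matrix.reindexAlgEquiv ℂ ℂ (gybeE d m k)) hk
    rw [_root_.map_mul, _root_.map_mul] at h2
    simpa using h2
  have hEq : A = B := by
    have h' : A * B * A = B * A * B := h
    have h1 : A * (B * A) = A * (B * B) := by
      rw [← mul_assoc, h', ← hcomm, mul_assoc]
    exact hBu.mul_left_cancel (hAu.mul_left_cancel h1)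
  have hKron : R ⊗ₖ ((1 : Matrix (Fin (d ^ k)) (Fin (d ^ k)) ℂ) ⊗ₖ
        (1 : Matrix (Fin (d ^ m)) (Fin (d ^ m)) ℂ)) =
      (1 : Matrix (Fin (d ^ m)) (Fin (d ^ m)) ℂ) ⊗ₖ
        ((1 : Matrix (Fin (d ^ k)) (Fin (d ^ k)) ℂ) ⊗ₖ R) := by
    apply (Matrix.reindex (gybeE d m k) (gybeE d m k)).injective
    rw [← gybeLeft_eq, ← gybeRight_eq]
    exact hEq
  have key : ∀ a a' : Fin (d ^ m), R a a' = (if a = a' then 1 else 0) * R 0 0 := by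
    intro a a'
    have := congrFun (congrFun hKron (a, 0, 0)) (a', 0, 0)
    simpa [Matrix.kroneckerMap_apply, Matrix.one_apply] using this
  refine ⟨R 0 0, ?_, ?_⟩
  · intro h0
    have : R = 0 := by
      ext a a'
      rw [key a a', h0, mul_zero, Matrix.zero_apply]
    rw [this] at hRdet
    simp at hRdet
  · ext a a'
    rw [key a a']
    simp [Matrix.one_apply, Matrix.smul_apply, mul_comm]
end

section
/- For every d ≥ 1, the d² × d² matrix R_d = (I ⊗ F_d) · C²_{X,d} · (I ⊗ F_d†) is a diagonal unitary matrix, and R_d satisfies the algebraic Yang–Baxter equation R₁₂R₁₃R₂₃ = R₂₃R₁₃R₁₂ (with R = R_d). -/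
open Matrix
open scoped Kronecker

/-- The `d × d` increment (cyclic shift) gate: entry `(i, j)` is `1` iff `i ≡ j + 1 (mod d)`. -/
def Xgate (d : ℕ) : Matrix (Fin d) (Fin d) ℂ :=
  Matrix.of fun i j => if (i : ℕ) = ((j : ℕ) + 1) % d then 1 else 0

/-- The `d × d` discrete Fourier transform matrix, `(F_d)_{jk} = ω^{jk}/√d` with
`ω = e^{2πi/d}`. -/
noncomputable def Fourier (d : ℕ) : Matrix (Fin d) (Fin d) ℂ :=
  Matrix.of fun j k =>
    Complex.exp (2 * Real.pi * Complex.I * (j : ℕ) * (k : ℕ) / d) / (Real.sqrt d : ℂ)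

/-- The controlled increment gate `C²_{X,d}` as a `d² × d²` matrix acting on `ℂ^d ⊗ ℂ^d`:
block diagonal with `d` diagonal blocks of size `d`, all the identity except the second
block, which is `X_d`. -/
def CInc2 (d : ℕ) : Matrix (Fin d × Fin d) (Fin d × Fin d) ℂ :=
  Matrix.of fun p q =>
    if p.1 = q.1 then
      if (p.1 : ℕ) = 1 then Xgate d p.2 q.2 else if p.2 = q.2 then 1 else 0
    else 0

/-- `R_d = (I ⊗ F_d) C²_{X,d} (I ⊗ F_d†)`. -/
noncomputable def Rd (d : ℕ) : Matrix (Fin d × Fin d) (Fin d × Fin d) ℂ :=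
  ((1 : Matrix (Fin d) (Fin d) ℂ) ⊗ₖ Fourier d) * CInc2 d *
    ((1 : Matrix (Fin d) (Fin d) ℂ) ⊗ₖ (Fourier d)ᴴ)

/-- The swap operator `P : e_i ⊗ e_j ↦ e_j ⊗ e_i` on `ℂ^d ⊗ ℂ^d`. -/
def swapP (d : ℕ) : Matrix (Fin d × Fin d) (Fin d × Fin d) ℂ :=
  Matrix.of fun p q => if p.1 = q.2 ∧ p.2 = q.1 then 1 else 0

/-- The algebraic Yang–Baxter equation `R₁₂ R₁₃ R₂₃ = R₂₃ R₁₃ R₁₂` for a `d² × d²` matrix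
acting on `ℂ^d ⊗ ℂ^d`, with tensor factors identified via the canonical associativity
reindexing. Here `R₁₂ = R ⊗ I`, `R₂₃ = I ⊗ R` and `R₁₃ = (I ⊗ P)(R ⊗ I)(I ⊗ P)`. -/
def aYBE {d : ℕ} (R : Matrix (Fin d × Fin d) (Fin d × Fin d) ℂ) : Prop :=
  let e := Equiv.prodAssoc (Fin d) (Fin d) (Fin d)
  let R12 := Matrix.reindex e e (R ⊗ₖ (1 : Matrix (Fin d) (Fin d) ℂ))
  let R23 := (1 : Matrix (Fin d) (Fin d) ℂ) ⊗ₖ R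
  let IP := (1 : Matrix (Fin d) (Fin d) ℂ) ⊗ₖ swapP d
  let R13 := IP * R12 * IP
  R12 * R13 * R23 = R23 * R13 * R12

/-!
With `ω = e^{2πi/d}`, the columns of `F_d` are the characters `k ↦ ω^{jk}` of `ℤ/d`, so shifting a
column index by one multiplies row `j` by `ω^j`: `F_d X_d = diag(ω^j) F_d`, and `F_d` is unitary by
orthogonality of characters. Conjugating `C²_{X,d} = |1⟩⟨1| ⊗ X_d + (I - |1⟩⟨1|) ⊗ I` by `I ⊗ F_d`
therefore gives the diagonal matrix `|1⟩⟨1| ⊗ diag(ω^j) + (I - |1⟩⟨1|) ⊗ I`, whose entries are roots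
of unity. For a diagonal `R` the matrices `R₁₂`, `R₁₃`, `R₂₃` are all diagonal, hence commute, and
the Yang–Baxter equation holds trivially.
-/

noncomputable def fourierRoot (d : ℕ) : ℂ := Complex.exp (2 * Real.pi * Complex.I / d)

lemma isPrimitiveRoot_fourierRoot {d : ℕ} (hd : d ≠ 0) : IsPrimitiveRoot (fourierRoot d) d :=
  Complex.isPrimitiveRoot_exp d hd

lemma star_fourierRoot {d : ℕ} (hd : d ≠ 0) : star (fourierRoot d) = (fourierRoot d)⁻¹ :=
  (Complex.inv_eq_conj ((isPrimitiveRoot_fourierRoot hd).norm'_eq_one hd)).symm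

lemma Fourier_apply {d : ℕ} (j k : Fin d) :
    Fourier d j k = fourierRoot d ^ ((j : ℕ) * k) / (Real.sqrt d : ℂ) := by
  rw [Fourier, of_apply, fourierRoot, ← Complex.exp_nat_mul]
  push_cast
  ring_nf

lemma geom_sum_eq_zero_of_pow_eq_one {K : Type*} [Field K] {z : K} {n : ℕ} (hz : z ^ n = 1)
    (hz1 : z ≠ 1) : ∑ i ∈ Finset.range n, z ^ i = 0 := by
  rw [geom_sum_eq hz1, hz, sub_self, zero_div]

lemma Fourier_mul_conjTranspose (d : ℕ) : Fourier d * (Fourier d)ᴴ = 1 := by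
  rcases eq_or_ne d 0 with rfl | hd
  · exact Subsingleton.elim _ _
  have hω := isPrimitiveRoot_fourierRoot hd
  have hsqrt : (Real.sqrt d : ℂ) * (Real.sqrt d : ℂ) = d := by
    rw [← Complex.ofReal_mul, Real.mul_self_sqrt d.cast_nonneg, Complex.ofReal_natCast]
  ext j k
  set z := fourierRoot d ^ (j : ℕ) * (fourierRoot d ^ (k : ℕ))⁻¹
  have hterm (m : Fin d) : Fourier d j m * star (Fourier d k m) = z ^ (m : ℕ) / d := by
    rw [Fourier_apply, Fourier_apply, star_div₀, star_pow, star_fourierRoot hd, Complex.star_def,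
      Complex.conj_ofReal, div_mul_div_comm, hsqrt, mul_pow, inv_pow, inv_pow, ← pow_mul,
      ← pow_mul]
  have hz : z ^ d = 1 := by
    rw [mul_pow, inv_pow, ← pow_mul, ← pow_mul, mul_comm _ d, mul_comm _ d, pow_mul, pow_mul,
      hω.pow_eq_one, one_pow, one_pow, inv_one, mul_one]
  have hz1 : z = 1 ↔ j = k := by
    rw [mul_inv_eq_one₀ (pow_ne_zero _ (hω.ne_zero hd)), Fin.ext_iff]
    exact ⟨fun h => hω.pow_inj j.isLt k.isLt h, fun h => h ▸ rfl⟩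
  simp_rw [mul_apply, conjTranspose_apply, hterm, ← Finset.sum_div,
    Fin.sum_univ_eq_sum_range (z ^ ·), one_apply]
  by_cases hjk : j = k
  · simp [hjk, hz1.2 hjk, hd]
  · rw [geom_sum_eq_zero_of_pow_eq_one hz (mt hz1.1 hjk), if_neg hjk, zero_div]

lemma mul_Xgate_apply {m : Type*} {d : ℕ} (A : Matrix m (Fin d) ℂ) (i : m) (s : Fin d) :
    (A * Xgate d) i s = A i ⟨((s : ℕ) + 1) % d, Nat.mod_lt _ s.pos⟩ := by
  rw [mul_apply, Finset.sum_eq_single ⟨((s : ℕ) + 1) % d, Nat.mod_lt _ s.pos⟩]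
  · simp [Xgate]
  · intro q _ hq
    simp [Xgate, Fin.ext_iff.not.mp hq]
  · simp

lemma Fourier_mul_Xgate (d : ℕ) :
    Fourier d * Xgate d = diagonal (fun j : Fin d => fourierRoot d ^ (j : ℕ)) * Fourier d := by
  ext j s
  have hω := isPrimitiveRoot_fourierRoot s.pos.ne'
  rw [mul_Xgate_apply, diagonal_mul, Fourier_apply, Fourier_apply, mul_comm (j : ℕ),
    mul_comm (j : ℕ), pow_mul, pow_mul, ← pow_eq_pow_mod _ hω.pow_eq_one, pow_succ, mul_pow]
  ring

lemma Fourier_mul_Xgate_mul_conjTranspose (d : ℕ) :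
    Fourier d * Xgate d * (Fourier d)ᴴ = diagonal fun j : Fin d => fourierRoot d ^ (j : ℕ) := by
  rw [Fourier_mul_Xgate, mul_assoc, Fourier_mul_conjTranspose, Matrix.mul_one]

def oneIndicator (d : ℕ) : Fin d → ℂ := fun a => if (a : ℕ) = 1 then 1 else 0

lemma CInc2_eq_kronecker (d : ℕ) :
    CInc2 d = diagonal (oneIndicator d) ⊗ₖ Xgate d + diagonal (1 - oneIndicator d) ⊗ₖ 1 := by
  ext ⟨a, b⟩ ⟨r, s⟩
  by_cases har : a = r
  · subst har
    by_cases ha : (a : ℕ) = 1 <;> simp [CInc2, oneIndicator, ha, one_apply]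
  · simp [CInc2, har]

lemma Rd_eq_diagonal (d : ℕ) :
    Rd d = diagonal fun p : Fin d × Fin d =>
      if (p.1 : ℕ) = 1 then fourierRoot d ^ (p.2 : ℕ) else 1 := by
  have hkron : Rd d = diagonal (oneIndicator d) ⊗ₖ diagonal (fun j : Fin d => fourierRoot d ^ (j : ℕ))
      + diagonal (1 - oneIndicator d) ⊗ₖ 1 := by
    simp only [Rd, CInc2_eq_kronecker, mul_add, add_mul, ← mul_kronecker_mul, Matrix.one_mul,
      Matrix.mul_one, Fourier_mul_Xgate_mul_conjTranspose, Fourier_mul_conjTranspose]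
  rw [hkron, ← diagonal_one, diagonal_kronecker_diagonal, diagonal_kronecker_diagonal,
    diagonal_add]
  congr 1
  ext ⟨a, j⟩
  by_cases ha : (a : ℕ) = 1 <;> simp [oneIndicator, ha]

lemma Rd_mul_conjTranspose (d : ℕ) : Rd d * (Rd d)ᴴ = 1 := by
  rw [Rd_eq_diagonal, diagonal_conjTranspose, diagonal_mul_diagonal, ← diagonal_one]
  congr 1
  ext ⟨a, j⟩
  have hd : d ≠ 0 := a.pos.ne'
  by_cases ha : (a : ℕ) = 1
  · simp [ha, star_fourierRoot hd, (isPrimitiveRoot_fourierRoot hd).ne_zero hd]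
  · simp [ha]

lemma swapP_eq_permMatrix (d : ℕ) :
    swapP d = Equiv.Perm.permMatrix ℂ (Equiv.prodComm (Fin d) (Fin d)) := by
  ext p q
  simp [swapP, PEquiv.toMatrix_apply, Prod.ext_iff, eq_comm, and_comm]

lemma one_kronecker_permMatrix {m n R : Type*} [DecidableEq m] [DecidableEq n] [MulZeroOneClass R]
    (σ : Equiv.Perm n) :
    (1 : Matrix m m R) ⊗ₖ Equiv.Perm.permMatrix R σ =
      Equiv.Perm.permMatrix R ((Equiv.refl m).prodCongr σ) := by
  ext ⟨a, b⟩ ⟨a', b'⟩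
  by_cases h : a = a' <;> simp [PEquiv.toMatrix_apply, one_apply, h]

lemma permMatrix_mul_diagonal_mul_permMatrix {n R : Type*} [Fintype n] [DecidableEq n]
    [NonAssocSemiring R] (σ : Equiv.Perm n) (hσ : σ.symm = σ) (w : n → R) :
    Equiv.Perm.permMatrix R σ * diagonal w * Equiv.Perm.permMatrix R σ = diagonal (w ∘ σ) := by
  rw [PEquiv.toMatrix_toPEquiv_mul, PEquiv.mul_toMatrix_toPEquiv, submatrix_submatrix, hσ]
  exact submatrix_diagonal_equiv w σ

lemma aYBE_diagonal {d : ℕ} (v : Fin d × Fin d → ℂ) : aYBE (diagonal v) := by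
  have h12 : reindex (Equiv.prodAssoc (Fin d) (Fin d) (Fin d))
      (Equiv.prodAssoc (Fin d) (Fin d) (Fin d)) (diagonal v ⊗ₖ (1 : Matrix (Fin d) (Fin d) ℂ)) =
      diagonal fun x => v (x.1, x.2.1) := by
    rw [← diagonal_one, diagonal_kronecker_diagonal, reindex_apply, submatrix_diagonal_equiv]
    simp [Function.comp_def]
  have h23 : (1 : Matrix (Fin d) (Fin d) ℂ) ⊗ₖ diagonal v = diagonal fun x => v x.2 := by
    rw [← diagonal_one, diagonal_kronecker_diagonal]
    simp
  have h13 : ((1 : Matrix (Fin d) (Fin d) ℂ) ⊗ₖ swapP d) * (diagonal fun x => v (x.1, x.2.1)) *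
      ((1 : Matrix (Fin d) (Fin d) ℂ) ⊗ₖ swapP d) = diagonal fun x => v (x.1, x.2.2) := by
    rw [swapP_eq_permMatrix, one_kronecker_permMatrix, permMatrix_mul_diagonal_mul_permMatrix]
    · rfl
    · simp
  simp only [aYBE, h12, h23, h13, diagonal_mul_diagonal]
  congr 1
  ext x
  ring

theorem Rd_diag_unitary_aYBE_general (d : ℕ) :
    (Rd d).IsDiag ∧ Rd d * (Rd d)ᴴ = 1 ∧ aYBE (Rd d) := by
  refine ⟨?_, Rd_mul_conjTranspose d, ?_⟩ <;> rw [Rd_eq_diagonal]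
  · exact isDiag_diagonal _
  · exact aYBE_diagonal _

/-- For every `d ≥ 1`, `R_d = (I ⊗ F_d) C²_{X,d} (I ⊗ F_d†)` is a diagonal unitary matrix
satisfying the algebraic Yang–Baxter equation. -/
theorem Rd_diag_unitary_aYBE (d : ℕ) (hd : 1 ≤ d) :
    (Rd d).IsDiag ∧ Rd d * (Rd d)ᴴ = 1 ∧ aYBE (Rd d) :=
  Rd_diag_unitary_aYBE_general d
end

section
/- For all nonzero complex numbers α, β, the matrix X₃ satisfies the (2,3,2)-generalized Yang–Baxter equation (X₃ ⊗ I₄)(I₄ ⊗ X₃)(X₃ ⊗ I₄) = (I₄ ⊗ X₃)(X₃ ⊗ I₄)(I₄ ⊗ X₃). -/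
open Matrix
open scoped Kronecker

/-- The `(2,3,2)`-generalized Yang–Baxter equation for an `8 × 8` complex matrix acting on
`(ℂ²)^{⊗3}`: `(R ⊗ I₄)(I₄ ⊗ R)(R ⊗ I₄) = (I₄ ⊗ R)(R ⊗ I₄)(I₄ ⊗ R)`, both sides identified
as `32 × 32` matrices via the canonical reindexing. -/
noncomputable def gYBE232 (R : Matrix (Fin 8) (Fin 8) ℂ) : Prop :=
  let e₁ : Fin 8 × Fin 4 ≃ Fin 32 := finProdFinEquiv.trans (finCongr (by norm_num))
  let e₂ : Fin 4 × Fin 8 ≃ Fin 32 := finProdFinEquiv.trans (finCongr (by norm_num))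
  let A := Matrix.reindex e₁ e₁ (R ⊗ₖ (1 : Matrix (Fin 4) (Fin 4) ℂ))
  let B := Matrix.reindex e₂ e₂ ((1 : Matrix (Fin 4) (Fin 4) ℂ) ⊗ₖ R)
  A * B * A = B * A * B

/-- The X-shaped matrix `X₃` with parameters `α, β`. -/
noncomputable def X3 (α β : ℂ) : Matrix (Fin 8) (Fin 8) ℂ :=
  !![1, 0, 0, 0, 0, 0, 0, α * β ^ 2;
     0, 1, 0, 0, 0, 0, -β, 0;
     0, 0, 1, 0, 0, α, 0, 0;
     0, 0, 0, 1, -(1 / β), 0, 0, 0;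
     0, 0, 0, β, 1, 0, 0, 0;
     0, 0, -(1 / α), 0, 0, 1, 0, 0;
     0, 1 / β, 0, 0, 0, 0, 1, 0;
     -(1 / (α * β ^ 2)), 0, 0, 0, 0, 0, 0, 1]

set_option linter.all false

namespace X3Aux

noncomputable def aK (α β : ℂ) : Fin 8 → ℂ :=
  ![α * β ^ 2, -β, α, -(1 / β), β, -(1 / α), 1 / β, -(1 / (α * β ^ 2))]

noncomputable def K8 (α β : ℂ) : Matrix (Fin 8) (Fin 8) ℂ :=
  Matrix.of fun i j => aK α β i * if j = i.rev then 1 else 0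

lemma X3_eq (α β : ℂ) : X3 α β = 1 + K8 α β := by
  ext i j
  fin_cases i <;> fin_cases j <;>
    norm_num [X3, K8, aK, Matrix.one_apply, Fin.rev, Fin.ext_iff]

def e1 : Fin 8 × Fin 4 ≃ Fin 32 := finProdFinEquiv.trans (finCongr (by norm_num))
def e2 : Fin 4 × Fin 8 ≃ Fin 32 := finProdFinEquiv.trans (finCongr (by norm_num))

def fP : Fin 32 → Fin 32 := fun i => e1 ((e1.symm i).1.rev, (e1.symm i).2)
def fQ : Fin 32 → Fin 32 := fun i => e2 ((e2.symm i).1, (e2.symm i).2.rev)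
noncomputable def cP (α β : ℂ) : Fin 32 → ℂ := fun i => aK α β (e1.symm i).1
noncomputable def cQ (α β : ℂ) : Fin 32 → ℂ := fun i => aK α β (e2.symm i).2

noncomputable def sparse (c : Fin 32 → ℂ) (f : Fin 32 → Fin 32) : Matrix (Fin 32) (Fin 32) ℂ :=
  Matrix.of fun i j => c i * if j = f i then 1 else 0

lemma sparse_mul (c d : Fin 32 → ℂ) (f g : Fin 32 → Fin 32) :
    sparse c f * sparse d g = sparse (fun i => c i * d (f i)) (fun i => g (f i)) := by
  ext i j
  simp only [sparse, Matrix.mul_apply, Matrix.of_apply]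
  rw [Finset.sum_eq_single (f i)]
  · simp [mul_assoc]
  · intro k _ hk; simp [hk]
  · simp

lemma hP (α β : ℂ) :
    Matrix.reindex e1 e1 (K8 α β ⊗ₖ (1 : Matrix (Fin 4) (Fin 4) ℂ)) = sparse (cP α β) fP := by
  ext i j
  simp only [Matrix.reindex_apply, Matrix.submatrix_apply, Matrix.kroneckerMap_apply,
    K8, sparse, cP, fP, Matrix.of_apply, Matrix.one_apply]
  have hiff : (j = e1 ((e1.symm i).1.rev, (e1.symm i).2)) ↔
      ((e1.symm j).1 = (e1.symm i).1.rev ∧ (e1.symm j).2 = (e1.symm i).2) := by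
    rw [← Equiv.symm_apply_eq, Prod.ext_iff]
  simp only [hiff]
  rcases eq_or_ne (e1.symm j).1 (e1.symm i).1.rev with h1 | h1
  · rcases eq_or_ne (e1.symm i).2 (e1.symm j).2 with h2 | h2
    · simp [h1, ← h2]
    · simp [h1, h2, Ne.symm h2]
  · simp [h1]

lemma hQ (α β : ℂ) :
    Matrix.reindex e2 e2 ((1 : Matrix (Fin 4) (Fin 4) ℂ) ⊗ₖ K8 α β) = sparse (cQ α β) fQ := by
  ext i j
  simp only [Matrix.reindex_apply, Matrix.submatrix_apply, Matrix.kroneckerMap_apply,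
    K8, sparse, cQ, fQ, Matrix.of_apply, Matrix.one_apply]
  have hiff : (j = e2 ((e2.symm i).1, (e2.symm i).2.rev)) ↔
      ((e2.symm j).1 = (e2.symm i).1 ∧ (e2.symm j).2 = (e2.symm i).2.rev) := by
    rw [← Equiv.symm_apply_eq, Prod.ext_iff]
  simp only [hiff]
  rcases eq_or_ne (e2.symm j).2 (e2.symm i).2.rev with h1 | h1
  · rcases eq_or_ne (e2.symm i).1 (e2.symm j).1 with h2 | h2
    · simp [h1, ← h2]
    · simp [h1, h2, Ne.symm h2]
  · simp [h1]

lemma hfPfP : ∀ i, fP (fP i) = i := by decide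
lemma hfQfQ : ∀ i, fQ (fQ i) = i := by decide
lemma hfPQP : ∀ i, fP (fQ (fP i)) = fQ i := by decide
lemma hfQPQ : ∀ i, fQ (fP (fQ i)) = fP i := by decide

lemma haKrev (α β : ℂ) (hα : α ≠ 0) (hβ : β ≠ 0) :
    ∀ k : Fin 8, aK α β k * aK α β k.rev = -1 := by
  intro k
  fin_cases k <;>
    norm_num [aK, Fin.rev, Fin.ext_iff] <;>
    field_simp <;>
    try ring1

lemma hmixP (α β : ℂ) (hα : α ≠ 0) (hβ : β ≠ 0) :
    ∀ i : Fin 32, cP α β i * cQ α β (fP i) * cP α β (fQ (fP i)) = cQ α β i := by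
  have h0 : cP α β ⟨0, by norm_num⟩ * cQ α β (fP ⟨0, by norm_num⟩) * cP α β (fQ (fP ⟨0, by norm_num⟩)) = cQ α β ⟨0, by norm_num⟩ := by
    show (α * β ^ 2) * (β) * (1 / β) = (α * β ^ 2)
    first
    | ring1
    | (field_simp; all_goals first | ring1 | tauto | (ring_nf at *; simp_all))
  have h1 : cP α β ⟨1, by norm_num⟩ * cQ α β (fP ⟨1, by norm_num⟩) * cP α β (fQ (fP ⟨1, by norm_num⟩)) = cQ α β ⟨1, by norm_num⟩ := by
    show (α * β ^ 2) * (-(1 / α)) * (1 / β) = (-β)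
    first
    | ring1
    | (field_simp; all_goals first | ring1 | tauto | (ring_nf at *; simp_all))
  have h2 : cP α β ⟨2, by norm_num⟩ * cQ α β (fP ⟨2, by norm_num⟩) * cP α β (fQ (fP ⟨2, by norm_num⟩)) = cQ α β ⟨2, by norm_num⟩ := by
    show (α * β ^ 2) * (1 / β) * (1 / β) = (α)
    first
    | ring1
    | (field_simp; all_goals first | ring1 | tauto | (ring_nf at *; simp_all))
  have h3 : cP α β ⟨3, by norm_num⟩ * cQ α β (fP ⟨3, by norm_num⟩) * cP α β (fQ (fP ⟨3, by norm_num⟩)) = cQ α β ⟨3, by norm_num⟩ := by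
    show (α * β ^ 2) * (-(1 / (α * β ^ 2))) * (1 / β) = (-(1 / β))
    first
    | ring1
    | (field_simp; all_goals first | ring1 | tauto | (ring_nf at *; simp_all))
  have h4 : cP α β ⟨4, by norm_num⟩ * cQ α β (fP ⟨4, by norm_num⟩) * cP α β (fQ (fP ⟨4, by norm_num⟩)) = cQ α β ⟨4, by norm_num⟩ := by
    show (-β) * (α * β ^ 2) * (-(1 / (α * β ^ 2))) = (β)
    first
    | ring1
    | (field_simp; all_goals first | ring1 | tauto | (ring_nf at *; simp_all))
  have h5 : cP α β ⟨5, by norm_num⟩ * cQ α β (fP ⟨5, by norm_num⟩) * cP α β (fQ (fP ⟨5, by norm_num⟩)) = cQ α β ⟨5, by norm_num⟩ := by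
    show (-β) * (-β) * (-(1 / (α * β ^ 2))) = (-(1 / α))
    first
    | ring1
    | (field_simp; all_goals first | ring1 | tauto | (ring_nf at *; simp_all))
  have h6 : cP α β ⟨6, by norm_num⟩ * cQ α β (fP ⟨6, by norm_num⟩) * cP α β (fQ (fP ⟨6, by norm_num⟩)) = cQ α β ⟨6, by norm_num⟩ := by
    show (-β) * (α) * (-(1 / (α * β ^ 2))) = (1 / β)
    first
    | ring1
    | (field_simp; all_goals first | ring1 | tauto | (ring_nf at *; simp_all))
  have h7 : cP α β ⟨7, by norm_num⟩ * cQ α β (fP ⟨7, by norm_num⟩) * cP α β (fQ (fP ⟨7, by norm_num⟩)) = cQ α β ⟨7, by norm_num⟩ := by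
    show (-β) * (-(1 / β)) * (-(1 / (α * β ^ 2))) = (-(1 / (α * β ^ 2)))
    first
    | ring1
    | (field_simp; all_goals first | ring1 | tauto | (ring_nf at *; simp_all))
  have h8 : cP α β ⟨8, by norm_num⟩ * cQ α β (fP ⟨8, by norm_num⟩) * cP α β (fQ (fP ⟨8, by norm_num⟩)) = cQ α β ⟨8, by norm_num⟩ := by
    show (α) * (β) * (β) = (α * β ^ 2)
    first
    | ring1
    | (field_simp; all_goals first | ring1 | tauto | (ring_nf at *; simp_all))
  have h9 : cP α β ⟨9, by norm_num⟩ * cQ α β (fP ⟨9, by norm_num⟩) * cP α β (fQ (fP ⟨9, by norm_num⟩)) = cQ α β ⟨9, by norm_num⟩ := by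
    show (α) * (-(1 / α)) * (β) = (-β)
    first
    | ring1
    | (field_simp; all_goals first | ring1 | tauto | (ring_nf at *; simp_all))
  have h10 : cP α β ⟨10, by norm_num⟩ * cQ α β (fP ⟨10, by norm_num⟩) * cP α β (fQ (fP ⟨10, by norm_num⟩)) = cQ α β ⟨10, by norm_num⟩ := by
    show (α) * (1 / β) * (β) = (α)
    first
    | ring1
    | (field_simp; all_goals first | ring1 | tauto | (ring_nf at *; simp_all))
  have h11 : cP α β ⟨11, by norm_num⟩ * cQ α β (fP ⟨11, by norm_num⟩) * cP α β (fQ (fP ⟨11, by norm_num⟩)) = cQ α β ⟨11, by norm_num⟩ := by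
    show (α) * (-(1 / (α * β ^ 2))) * (β) = (-(1 / β))
    first
    | ring1
    | (field_simp; all_goals first | ring1 | tauto | (ring_nf at *; simp_all))
  have h12 : cP α β ⟨12, by norm_num⟩ * cQ α β (fP ⟨12, by norm_num⟩) * cP α β (fQ (fP ⟨12, by norm_num⟩)) = cQ α β ⟨12, by norm_num⟩ := by
    show (-(1 / β)) * (α * β ^ 2) * (-(1 / α)) = (β)
    first
    | ring1
    | (field_simp; all_goals first | ring1 | tauto | (ring_nf at *; simp_all))
  have h13 : cP α β ⟨13, by norm_num⟩ * cQ α β (fP ⟨13, by norm_num⟩) * cP α β (fQ (fP ⟨13, by norm_num⟩)) = cQ α β ⟨13, by norm_num⟩ := by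
    show (-(1 / β)) * (-β) * (-(1 / α)) = (-(1 / α))
    first
    | ring1
    | (field_simp; all_goals first | ring1 | tauto | (ring_nf at *; simp_all))
  have h14 : cP α β ⟨14, by norm_num⟩ * cQ α β (fP ⟨14, by norm_num⟩) * cP α β (fQ (fP ⟨14, by norm_num⟩)) = cQ α β ⟨14, by norm_num⟩ := by
    show (-(1 / β)) * (α) * (-(1 / α)) = (1 / β)
    first
    | ring1
    | (field_simp; all_goals first | ring1 | tauto | (ring_nf at *; simp_all))
  have h15 : cP α β ⟨15, by norm_num⟩ * cQ α β (fP ⟨15, by norm_num⟩) * cP α β (fQ (fP ⟨15, by norm_num⟩)) = cQ α β ⟨15, by norm_num⟩ := by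
    show (-(1 / β)) * (-(1 / β)) * (-(1 / α)) = (-(1 / (α * β ^ 2)))
    first
    | ring1
    | (field_simp; all_goals first | ring1 | tauto | (ring_nf at *; simp_all))
  have h16 : cP α β ⟨16, by norm_num⟩ * cQ α β (fP ⟨16, by norm_num⟩) * cP α β (fQ (fP ⟨16, by norm_num⟩)) = cQ α β ⟨16, by norm_num⟩ := by
    show (β) * (β) * (α) = (α * β ^ 2)
    first
    | ring1
    | (field_simp; all_goals first | ring1 | tauto | (ring_nf at *; simp_all))
  have h17 : cP α β ⟨17, by norm_num⟩ * cQ α β (fP ⟨17, by norm_num⟩) * cP α β (fQ (fP ⟨17, by norm_num⟩)) = cQ α β ⟨17, by norm_num⟩ := by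
    show (β) * (-(1 / α)) * (α) = (-β)
    first
    | ring1
    | (field_simp; all_goals first | ring1 | tauto | (ring_nf at *; simp_all))
  have h18 : cP α β ⟨18, by norm_num⟩ * cQ α β (fP ⟨18, by norm_num⟩) * cP α β (fQ (fP ⟨18, by norm_num⟩)) = cQ α β ⟨18, by norm_num⟩ := by
    show (β) * (1 / β) * (α) = (α)
    first
    | ring1
    | (field_simp; all_goals first | ring1 | tauto | (ring_nf at *; simp_all))
  have h19 : cP α β ⟨19, by norm_num⟩ * cQ α β (fP ⟨19, by norm_num⟩) * cP α β (fQ (fP ⟨19, by norm_num⟩)) = cQ α β ⟨19, by norm_num⟩ := by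
    show (β) * (-(1 / (α * β ^ 2))) * (α) = (-(1 / β))
    first
    | ring1
    | (field_simp; all_goals first | ring1 | tauto | (ring_nf at *; simp_all))
  have h20 : cP α β ⟨20, by norm_num⟩ * cQ α β (fP ⟨20, by norm_num⟩) * cP α β (fQ (fP ⟨20, by norm_num⟩)) = cQ α β ⟨20, by norm_num⟩ := by
    show (-(1 / α)) * (α * β ^ 2) * (-(1 / β)) = (β)
    first
    | ring1
    | (field_simp; all_goals first | ring1 | tauto | (ring_nf at *; simp_all))
  have h21 : cP α β ⟨21, by norm_num⟩ * cQ α β (fP ⟨21, by norm_num⟩) * cP α β (fQ (fP ⟨21, by norm_num⟩)) = cQ α β ⟨21, by norm_num⟩ := by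
    show (-(1 / α)) * (-β) * (-(1 / β)) = (-(1 / α))
    first
    | ring1
    | (field_simp; all_goals first | ring1 | tauto | (ring_nf at *; simp_all))
  have h22 : cP α β ⟨22, by norm_num⟩ * cQ α β (fP ⟨22, by norm_num⟩) * cP α β (fQ (fP ⟨22, by norm_num⟩)) = cQ α β ⟨22, by norm_num⟩ := by
    show (-(1 / α)) * (α) * (-(1 / β)) = (1 / β)
    first
    | ring1
    | (field_simp; all_goals first | ring1 | tauto | (ring_nf at *; simp_all))
  have h23 : cP α β ⟨23, by norm_num⟩ * cQ α β (fP ⟨23, by norm_num⟩) * cP α β (fQ (fP ⟨23, by norm_num⟩)) = cQ α β ⟨23, by norm_num⟩ := by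
    show (-(1 / α)) * (-(1 / β)) * (-(1 / β)) = (-(1 / (α * β ^ 2)))
    first
    | ring1
    | (field_simp; all_goals first | ring1 | tauto | (ring_nf at *; simp_all))
  have h24 : cP α β ⟨24, by norm_num⟩ * cQ α β (fP ⟨24, by norm_num⟩) * cP α β (fQ (fP ⟨24, by norm_num⟩)) = cQ α β ⟨24, by norm_num⟩ := by
    show (1 / β) * (β) * (α * β ^ 2) = (α * β ^ 2)
    first
    | ring1
    | (field_simp; all_goals first | ring1 | tauto | (ring_nf at *; simp_all))
  have h25 : cP α β ⟨25, by norm_num⟩ * cQ α β (fP ⟨25, by norm_num⟩) * cP α β (fQ (fP ⟨25, by norm_num⟩)) = cQ α β ⟨25, by norm_num⟩ := by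
    show (1 / β) * (-(1 / α)) * (α * β ^ 2) = (-β)
    first
    | ring1
    | (field_simp; all_goals first | ring1 | tauto | (ring_nf at *; simp_all))
  have h26 : cP α β ⟨26, by norm_num⟩ * cQ α β (fP ⟨26, by norm_num⟩) * cP α β (fQ (fP ⟨26, by norm_num⟩)) = cQ α β ⟨26, by norm_num⟩ := by
    show (1 / β) * (1 / β) * (α * β ^ 2) = (α)
    first
    | ring1
    | (field_simp; all_goals first | ring1 | tauto | (ring_nf at *; simp_all))
  have h27 : cP α β ⟨27, by norm_num⟩ * cQ α β (fP ⟨27, by norm_num⟩) * cP α β (fQ (fP ⟨27, by norm_num⟩)) = cQ α β ⟨27, by norm_num⟩ := by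
    show (1 / β) * (-(1 / (α * β ^ 2))) * (α * β ^ 2) = (-(1 / β))
    first
    | ring1
    | (field_simp; all_goals first | ring1 | tauto | (ring_nf at *; simp_all))
  have h28 : cP α β ⟨28, by norm_num⟩ * cQ α β (fP ⟨28, by norm_num⟩) * cP α β (fQ (fP ⟨28, by norm_num⟩)) = cQ α β ⟨28, by norm_num⟩ := by
    show (-(1 / (α * β ^ 2))) * (α * β ^ 2) * (-β) = (β)
    first
    | ring1
    | (field_simp; all_goals first | ring1 | tauto | (ring_nf at *; simp_all))
  have h29 : cP α β ⟨29, by norm_num⟩ * cQ α β (fP ⟨29, by norm_num⟩) * cP α β (fQ (fP ⟨29, by norm_num⟩)) = cQ α β ⟨29, by norm_num⟩ := by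
    show (-(1 / (α * β ^ 2))) * (-β) * (-β) = (-(1 / α))
    first
    | ring1
    | (field_simp; all_goals first | ring1 | tauto | (ring_nf at *; simp_all))
  have h30 : cP α β ⟨30, by norm_num⟩ * cQ α β (fP ⟨30, by norm_num⟩) * cP α β (fQ (fP ⟨30, by norm_num⟩)) = cQ α β ⟨30, by norm_num⟩ := by
    show (-(1 / (α * β ^ 2))) * (α) * (-β) = (1 / β)
    first
    | ring1
    | (field_simp; all_goals first | ring1 | tauto | (ring_nf at *; simp_all))
  have h31 : cP α β ⟨31, by norm_num⟩ * cQ α β (fP ⟨31, by norm_num⟩) * cP α β (fQ (fP ⟨31, by norm_num⟩)) = cQ α β ⟨31, by norm_num⟩ := by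
    show (-(1 / (α * β ^ 2))) * (-(1 / β)) * (-β) = (-(1 / (α * β ^ 2)))
    first
    | ring1
    | (field_simp; all_goals first | ring1 | tauto | (ring_nf at *; simp_all))
  intro i; fin_cases i
  exacts [h0, h1, h2, h3, h4, h5, h6, h7, h8, h9, h10, h11, h12, h13, h14, h15, h16, h17, h18, h19, h20, h21, h22, h23, h24, h25, h26, h27, h28, h29, h30, h31]

lemma hmixQ (α β : ℂ) (hα : α ≠ 0) (hβ : β ≠ 0) :
    ∀ i : Fin 32, cQ α β i * cP α β (fQ i) * cQ α β (fP (fQ i)) = cP α β i := by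
  have h0 : cQ α β ⟨0, by norm_num⟩ * cP α β (fQ ⟨0, by norm_num⟩) * cQ α β (fP (fQ ⟨0, by norm_num⟩)) = cP α β ⟨0, by norm_num⟩ := by
    show (α * β ^ 2) * (-β) * (-(1 / β)) = (α * β ^ 2)
    first
    | ring1
    | (field_simp; all_goals first | ring1 | tauto | (ring_nf at *; simp_all))
  have h1 : cQ α β ⟨1, by norm_num⟩ * cP α β (fQ ⟨1, by norm_num⟩) * cQ α β (fP (fQ ⟨1, by norm_num⟩)) = cP α β ⟨1, by norm_num⟩ := by
    show (-β) * (-β) * (α) = (α * β ^ 2)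
    first
    | ring1
    | (field_simp; all_goals first | ring1 | tauto | (ring_nf at *; simp_all))
  have h2 : cQ α β ⟨2, by norm_num⟩ * cP α β (fQ ⟨2, by norm_num⟩) * cQ α β (fP (fQ ⟨2, by norm_num⟩)) = cP α β ⟨2, by norm_num⟩ := by
    show (α) * (-β) * (-β) = (α * β ^ 2)
    first
    | ring1
    | (field_simp; all_goals first | ring1 | tauto | (ring_nf at *; simp_all))
  have h3 : cQ α β ⟨3, by norm_num⟩ * cP α β (fQ ⟨3, by norm_num⟩) * cQ α β (fP (fQ ⟨3, by norm_num⟩)) = cP α β ⟨3, by norm_num⟩ := by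
    show (-(1 / β)) * (-β) * (α * β ^ 2) = (α * β ^ 2)
    first
    | ring1
    | (field_simp; all_goals first | ring1 | tauto | (ring_nf at *; simp_all))
  have h4 : cQ α β ⟨4, by norm_num⟩ * cP α β (fQ ⟨4, by norm_num⟩) * cQ α β (fP (fQ ⟨4, by norm_num⟩)) = cP α β ⟨4, by norm_num⟩ := by
    show (β) * (α * β ^ 2) * (-(1 / (α * β ^ 2))) = (-β)
    first
    | ring1
    | (field_simp; all_goals first | ring1 | tauto | (ring_nf at *; simp_all))
  have h5 : cQ α β ⟨5, by norm_num⟩ * cP α β (fQ ⟨5, by norm_num⟩) * cQ α β (fP (fQ ⟨5, by norm_num⟩)) = cP α β ⟨5, by norm_num⟩ := by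
    show (-(1 / α)) * (α * β ^ 2) * (1 / β) = (-β)
    first
    | ring1
    | (field_simp; all_goals first | ring1 | tauto | (ring_nf at *; simp_all))
  have h6 : cQ α β ⟨6, by norm_num⟩ * cP α β (fQ ⟨6, by norm_num⟩) * cQ α β (fP (fQ ⟨6, by norm_num⟩)) = cP α β ⟨6, by norm_num⟩ := by
    show (1 / β) * (α * β ^ 2) * (-(1 / α)) = (-β)
    first
    | ring1
    | (field_simp; all_goals first | ring1 | tauto | (ring_nf at *; simp_all))
  have h7 : cQ α β ⟨7, by norm_num⟩ * cP α β (fQ ⟨7, by norm_num⟩) * cQ α β (fP (fQ ⟨7, by norm_num⟩)) = cP α β ⟨7, by norm_num⟩ := by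
    show (-(1 / (α * β ^ 2))) * (α * β ^ 2) * (β) = (-β)
    first
    | ring1
    | (field_simp; all_goals first | ring1 | tauto | (ring_nf at *; simp_all))
  have h8 : cQ α β ⟨8, by norm_num⟩ * cP α β (fQ ⟨8, by norm_num⟩) * cQ α β (fP (fQ ⟨8, by norm_num⟩)) = cP α β ⟨8, by norm_num⟩ := by
    show (α * β ^ 2) * (-(1 / β)) * (-(1 / β)) = (α)
    first
    | ring1
    | (field_simp; all_goals first | ring1 | tauto | (ring_nf at *; simp_all))
  have h9 : cQ α β ⟨9, by norm_num⟩ * cP α β (fQ ⟨9, by norm_num⟩) * cQ α β (fP (fQ ⟨9, by norm_num⟩)) = cP α β ⟨9, by norm_num⟩ := by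
    show (-β) * (-(1 / β)) * (α) = (α)
    first
    | ring1
    | (field_simp; all_goals first | ring1 | tauto | (ring_nf at *; simp_all))
  have h10 : cQ α β ⟨10, by norm_num⟩ * cP α β (fQ ⟨10, by norm_num⟩) * cQ α β (fP (fQ ⟨10, by norm_num⟩)) = cP α β ⟨10, by norm_num⟩ := by
    show (α) * (-(1 / β)) * (-β) = (α)
    first
    | ring1
    | (field_simp; all_goals first | ring1 | tauto | (ring_nf at *; simp_all))
  have h11 : cQ α β ⟨11, by norm_num⟩ * cP α β (fQ ⟨11, by norm_num⟩) * cQ α β (fP (fQ ⟨11, by norm_num⟩)) = cP α β ⟨11, by norm_num⟩ := by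
    show (-(1 / β)) * (-(1 / β)) * (α * β ^ 2) = (α)
    first
    | ring1
    | (field_simp; all_goals first | ring1 | tauto | (ring_nf at *; simp_all))
  have h12 : cQ α β ⟨12, by norm_num⟩ * cP α β (fQ ⟨12, by norm_num⟩) * cQ α β (fP (fQ ⟨12, by norm_num⟩)) = cP α β ⟨12, by norm_num⟩ := by
    show (β) * (α) * (-(1 / (α * β ^ 2))) = (-(1 / β))
    first
    | ring1
    | (field_simp; all_goals first | ring1 | tauto | (ring_nf at *; simp_all))
  have h13 : cQ α β ⟨13, by norm_num⟩ * cP α β (fQ ⟨13, by norm_num⟩) * cQ α β (fP (fQ ⟨13, by norm_num⟩)) = cP α β ⟨13, by norm_num⟩ := by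
    show (-(1 / α)) * (α) * (1 / β) = (-(1 / β))
    first
    | ring1
    | (field_simp; all_goals first | ring1 | tauto | (ring_nf at *; simp_all))
  have h14 : cQ α β ⟨14, by norm_num⟩ * cP α β (fQ ⟨14, by norm_num⟩) * cQ α β (fP (fQ ⟨14, by norm_num⟩)) = cP α β ⟨14, by norm_num⟩ := by
    show (1 / β) * (α) * (-(1 / α)) = (-(1 / β))
    first
    | ring1
    | (field_simp; all_goals first | ring1 | tauto | (ring_nf at *; simp_all))
  have h15 : cQ α β ⟨15, by norm_num⟩ * cP α β (fQ ⟨15, by norm_num⟩) * cQ α β (fP (fQ ⟨15, by norm_num⟩)) = cP α β ⟨15, by norm_num⟩ := by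
    show (-(1 / (α * β ^ 2))) * (α) * (β) = (-(1 / β))
    first
    | ring1
    | (field_simp; all_goals first | ring1 | tauto | (ring_nf at *; simp_all))
  have h16 : cQ α β ⟨16, by norm_num⟩ * cP α β (fQ ⟨16, by norm_num⟩) * cQ α β (fP (fQ ⟨16, by norm_num⟩)) = cP α β ⟨16, by norm_num⟩ := by
    show (α * β ^ 2) * (-(1 / α)) * (-(1 / β)) = (β)
    first
    | ring1
    | (field_simp; all_goals first | ring1 | tauto | (ring_nf at *; simp_all))
  have h17 : cQ α β ⟨17, by norm_num⟩ * cP α β (fQ ⟨17, by norm_num⟩) * cQ α β (fP (fQ ⟨17, by norm_num⟩)) = cP α β ⟨17, by norm_num⟩ := by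
    show (-β) * (-(1 / α)) * (α) = (β)
    first
    | ring1
    | (field_simp; all_goals first | ring1 | tauto | (ring_nf at *; simp_all))
  have h18 : cQ α β ⟨18, by norm_num⟩ * cP α β (fQ ⟨18, by norm_num⟩) * cQ α β (fP (fQ ⟨18, by norm_num⟩)) = cP α β ⟨18, by norm_num⟩ := by
    show (α) * (-(1 / α)) * (-β) = (β)
    first
    | ring1
    | (field_simp; all_goals first | ring1 | tauto | (ring_nf at *; simp_all))
  have h19 : cQ α β ⟨19, by norm_num⟩ * cP α β (fQ ⟨19, by norm_num⟩) * cQ α β (fP (fQ ⟨19, by norm_num⟩)) = cP α β ⟨19, by norm_num⟩ := by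
    show (-(1 / β)) * (-(1 / α)) * (α * β ^ 2) = (β)
    first
    | ring1
    | (field_simp; all_goals first | ring1 | tauto | (ring_nf at *; simp_all))
  have h20 : cQ α β ⟨20, by norm_num⟩ * cP α β (fQ ⟨20, by norm_num⟩) * cQ α β (fP (fQ ⟨20, by norm_num⟩)) = cP α β ⟨20, by norm_num⟩ := by
    show (β) * (β) * (-(1 / (α * β ^ 2))) = (-(1 / α))
    first
    | ring1
    | (field_simp; all_goals first | ring1 | tauto | (ring_nf at *; simp_all))
  have h21 : cQ α β ⟨21, by norm_num⟩ * cP α β (fQ ⟨21, by norm_num⟩) * cQ α β (fP (fQ ⟨21, by norm_num⟩)) = cP α β ⟨21, by norm_num⟩ := by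
    show (-(1 / α)) * (β) * (1 / β) = (-(1 / α))
    first
    | ring1
    | (field_simp; all_goals first | ring1 | tauto | (ring_nf at *; simp_all))
  have h22 : cQ α β ⟨22, by norm_num⟩ * cP α β (fQ ⟨22, by norm_num⟩) * cQ α β (fP (fQ ⟨22, by norm_num⟩)) = cP α β ⟨22, by norm_num⟩ := by
    show (1 / β) * (β) * (-(1 / α)) = (-(1 / α))
    first
    | ring1
    | (field_simp; all_goals first | ring1 | tauto | (ring_nf at *; simp_all))
  have h23 : cQ α β ⟨23, by norm_num⟩ * cP α β (fQ ⟨23, by norm_num⟩) * cQ α β (fP (fQ ⟨23, by norm_num⟩)) = cP α β ⟨23, by norm_num⟩ := by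
    show (-(1 / (α * β ^ 2))) * (β) * (β) = (-(1 / α))
    first
    | ring1
    | (field_simp; all_goals first | ring1 | tauto | (ring_nf at *; simp_all))
  have h24 : cQ α β ⟨24, by norm_num⟩ * cP α β (fQ ⟨24, by norm_num⟩) * cQ α β (fP (fQ ⟨24, by norm_num⟩)) = cP α β ⟨24, by norm_num⟩ := by
    show (α * β ^ 2) * (-(1 / (α * β ^ 2))) * (-(1 / β)) = (1 / β)
    first
    | ring1
    | (field_simp; all_goals first | ring1 | tauto | (ring_nf at *; simp_all))
  have h25 : cQ α β ⟨25, by norm_num⟩ * cP α β (fQ ⟨25, by norm_num⟩) * cQ α β (fP (fQ ⟨25, by norm_num⟩)) = cP α β ⟨25, by norm_num⟩ := by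
    show (-β) * (-(1 / (α * β ^ 2))) * (α) = (1 / β)
    first
    | ring1
    | (field_simp; all_goals first | ring1 | tauto | (ring_nf at *; simp_all))
  have h26 : cQ α β ⟨26, by norm_num⟩ * cP α β (fQ ⟨26, by norm_num⟩) * cQ α β (fP (fQ ⟨26, by norm_num⟩)) = cP α β ⟨26, by norm_num⟩ := by
    show (α) * (-(1 / (α * β ^ 2))) * (-β) = (1 / β)
    first
    | ring1
    | (field_simp; all_goals first | ring1 | tauto | (ring_nf at *; simp_all))
  have h27 : cQ α β ⟨27, by norm_num⟩ * cP α β (fQ ⟨27, by norm_num⟩) * cQ α β (fP (fQ ⟨27, by norm_num⟩)) = cP α β ⟨27, by norm_num⟩ := by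
    show (-(1 / β)) * (-(1 / (α * β ^ 2))) * (α * β ^ 2) = (1 / β)
    first
    | ring1
    | (field_simp; all_goals first | ring1 | tauto | (ring_nf at *; simp_all))
  have h28 : cQ α β ⟨28, by norm_num⟩ * cP α β (fQ ⟨28, by norm_num⟩) * cQ α β (fP (fQ ⟨28, by norm_num⟩)) = cP α β ⟨28, by norm_num⟩ := by
    show (β) * (1 / β) * (-(1 / (α * β ^ 2))) = (-(1 / (α * β ^ 2)))
    first
    | ring1
    | (field_simp; all_goals first | ring1 | tauto | (ring_nf at *; simp_all))
  have h29 : cQ α β ⟨29, by norm_num⟩ * cP α β (fQ ⟨29, by norm_num⟩) * cQ α β (fP (fQ ⟨29, by norm_num⟩)) = cP α β ⟨29, by norm_num⟩ := by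
    show (-(1 / α)) * (1 / β) * (1 / β) = (-(1 / (α * β ^ 2)))
    first
    | ring1
    | (field_simp; all_goals first | ring1 | tauto | (ring_nf at *; simp_all))
  have h30 : cQ α β ⟨30, by norm_num⟩ * cP α β (fQ ⟨30, by norm_num⟩) * cQ α β (fP (fQ ⟨30, by norm_num⟩)) = cP α β ⟨30, by norm_num⟩ := by
    show (1 / β) * (1 / β) * (-(1 / α)) = (-(1 / (α * β ^ 2)))
    first
    | ring1
    | (field_simp; all_goals first | ring1 | tauto | (ring_nf at *; simp_all))
  have h31 : cQ α β ⟨31, by norm_num⟩ * cP α β (fQ ⟨31, by norm_num⟩) * cQ α β (fP (fQ ⟨31, by norm_num⟩)) = cP α β ⟨31, by norm_num⟩ := by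
    show (-(1 / (α * β ^ 2))) * (1 / β) * (β) = (-(1 / (α * β ^ 2)))
    first
    | ring1
    | (field_simp; all_goals first | ring1 | tauto | (ring_nf at *; simp_all))
  intro i; fin_cases i
  exacts [h0, h1, h2, h3, h4, h5, h6, h7, h8, h9, h10, h11, h12, h13, h14, h15, h16, h17, h18, h19, h20, h21, h22, h23, h24, h25, h26, h27, h28, h29, h30, h31]


lemma hPP (α β : ℂ) (hα : α ≠ 0) (hβ : β ≠ 0) :
    sparse (cP α β) fP * sparse (cP α β) fP = -1 := by
  rw [sparse_mul]
  ext i j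
  have hc : cP α β i * cP α β (fP i) = -1 := by
    have : cP α β (fP i) = aK α β (e1.symm i).1.rev := by
      simp [cP, fP, Equiv.symm_apply_apply]
    rw [this]
    exact haKrev α β hα hβ _
  simp only [sparse, Matrix.of_apply, hc, hfPfP i, Matrix.neg_apply, Matrix.one_apply]
  rcases eq_or_ne i j with h | h
  · simp [h]
  · simp [h, Ne.symm h]

lemma hQQ (α β : ℂ) (hα : α ≠ 0) (hβ : β ≠ 0) :
    sparse (cQ α β) fQ * sparse (cQ α β) fQ = -1 := by
  rw [sparse_mul]
  ext i j
  have hc : cQ α β i * cQ α β (fQ i) = -1 := by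
    have : cQ α β (fQ i) = aK α β (e2.symm i).2.rev := by
      simp [cQ, fQ, Equiv.symm_apply_apply]
    rw [this]
    exact haKrev α β hα hβ _
  simp only [sparse, Matrix.of_apply, hc, hfQfQ i, Matrix.neg_apply, Matrix.one_apply]
  rcases eq_or_ne i j with h | h
  · simp [h]
  · simp [h, Ne.symm h]

lemma hPQP (α β : ℂ) (hα : α ≠ 0) (hβ : β ≠ 0) :
    sparse (cP α β) fP * sparse (cQ α β) fQ * sparse (cP α β) fP = sparse (cQ α β) fQ := by
  rw [sparse_mul, sparse_mul]
  ext i j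
  simp only [sparse, Matrix.of_apply, hmixP α β hα hβ i, hfPQP i]

lemma hQPQ (α β : ℂ) (hα : α ≠ 0) (hβ : β ≠ 0) :
    sparse (cQ α β) fQ * sparse (cP α β) fP * sparse (cQ α β) fQ = sparse (cP α β) fP := by
  rw [sparse_mul, sparse_mul]
  ext i j
  simp only [sparse, Matrix.of_apply, hmixQ α β hα hβ i, hfQPQ i]

lemma reindex_one_add {n m : Type*} [Fintype n] [Fintype m] [DecidableEq n] [DecidableEq m]
    (e : n ≃ m) (M : Matrix n n ℂ) :
    Matrix.reindex e e (1 + M) = 1 + Matrix.reindex e e M := by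
  simp [Matrix.reindex_apply, Matrix.submatrix_add, Matrix.submatrix_one_equiv]

lemma braid {P Q : Matrix (Fin 32) (Fin 32) ℂ} (h1 : P * P = -1) (h2 : Q * Q = -1)
    (h3 : P * Q * P = Q) (h4 : Q * P * Q = P) :
    (1 + P) * (1 + Q) * (1 + P) = (1 + Q) * (1 + P) * (1 + Q) := by
  have eL : (1 + P) * (1 + Q) * (1 + P) = 1 + P + P + Q + P * Q + Q * P + P * P + P * Q * P := by
    noncomm_ring
  have eR : (1 + Q) * (1 + P) * (1 + Q) = 1 + Q + Q + P + Q * P + P * Q + Q * Q + Q * P * Q := by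
    noncomm_ring
  rw [eL, eR, h1, h2, h3, h4]
  abel

end X3Aux

/-- For all nonzero `α, β`, the matrix `X₃` solves the `(2,3,2)`-gYBE. -/
theorem X3_gYBE (α β : ℂ) (hα : α ≠ 0) (hβ : β ≠ 0) : gYBE232 (X3 α β) := by
  show Matrix.reindex X3Aux.e1 X3Aux.e1 (X3 α β ⊗ₖ (1 : Matrix (Fin 4) (Fin 4) ℂ)) *
      Matrix.reindex X3Aux.e2 X3Aux.e2 ((1 : Matrix (Fin 4) (Fin 4) ℂ) ⊗ₖ X3 α β) *
      Matrix.reindex X3Aux.e1 X3Aux.e1 (X3 α β ⊗ₖ (1 : Matrix (Fin 4) (Fin 4) ℂ)) =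
      Matrix.reindex X3Aux.e2 X3Aux.e2 ((1 : Matrix (Fin 4) (Fin 4) ℂ) ⊗ₖ X3 α β) *
      Matrix.reindex X3Aux.e1 X3Aux.e1 (X3 α β ⊗ₖ (1 : Matrix (Fin 4) (Fin 4) ℂ)) *
      Matrix.reindex X3Aux.e2 X3Aux.e2 ((1 : Matrix (Fin 4) (Fin 4) ℂ) ⊗ₖ X3 α β)
  have hA : Matrix.reindex X3Aux.e1 X3Aux.e1 (X3 α β ⊗ₖ (1 : Matrix (Fin 4) (Fin 4) ℂ)) =
      1 + X3Aux.sparse (X3Aux.cP α β) X3Aux.fP := by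
    rw [X3Aux.X3_eq, Matrix.add_kronecker, Matrix.one_kronecker_one,
      X3Aux.reindex_one_add, X3Aux.hP]
  have hB : Matrix.reindex X3Aux.e2 X3Aux.e2 ((1 : Matrix (Fin 4) (Fin 4) ℂ) ⊗ₖ X3 α β) =
      1 + X3Aux.sparse (X3Aux.cQ α β) X3Aux.fQ := by
    rw [X3Aux.X3_eq, Matrix.kronecker_add, Matrix.one_kronecker_one,
      X3Aux.reindex_one_add, X3Aux.hQ]
  rw [hA, hB]
  exact X3Aux.braid (X3Aux.hPP α β hα hβ) (X3Aux.hQQ α β hα hβ)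
    (X3Aux.hPQP α β hα hβ) (X3Aux.hQPQ α β hα hβ)
end

section
/- Let α, β, δ, λ be nonzero complex numbers such that Re(δ) = 0, δ² = −|β|², |α| = 1, and |λ|² = 1/(1 + |δ|²). Then λX₁ is a unitary matrix: (λX₁)(λX₁)† = I₈. -/
/-!
The hypotheses give `conj δ = -δ`, `conj α = α⁻¹` and `conj β = -δ² / β`, hence `X₁†` is `X₁` with
`β` and `δ` negated. `X₁` is a direct sum of `2 × 2` blocks on the index pairs `{1,8}, {2,7}, {3,6},
{4,5}`, and each block times its sign-flipped copy is `(1 - δ²) I`. Finally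
`1 - δ² = 1 + |δ|² = 1 / |λ|²`.
-/

open Matrix ComplexConjugate

/-- The X-shaped matrix `X₁` with parameters `α, β, δ`. -/
noncomputable def X1 (α β δ : ℂ) : Matrix (Fin 8) (Fin 8) ℂ :=
  !![δ, 0, 0, 0, 0, 0, 0, α * β ^ 2 / δ ^ 2;
     0, 1, 0, 0, 0, 0, β, 0;
     0, 0, δ, 0, 0, α, 0, 0;
     0, 0, 0, 1, δ ^ 2 / β, 0, 0, 0;
     0, 0, 0, β, 1, 0, 0, 0;
     0, 0, 1 / α, 0, 0, δ, 0, 0;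
     0, δ ^ 2 / β, 0, 0, 0, 0, 1, 0;
     δ ^ 2 / (α * β ^ 2), 0, 0, 0, 0, 0, 0, δ]

theorem Matrix.smul_mul_conjTranspose_smul {R m n : Type*} [CommSemiring R] [StarRing R]
    [Fintype n] (c : R) (A : Matrix m n R) : (c • A) * (c • A)ᴴ = (c * star c) • (A * Aᴴ) := by
  rw [conjTranspose_smul, smul_mul, Matrix.mul_smul, smul_smul]

theorem X1_mul_X1_neg {α β δ : ℂ} (hα : α ≠ 0) (hβ : β ≠ 0) (hδ : δ ≠ 0) :
    X1 α β δ * X1 α (-β) (-δ) = (1 - δ ^ 2) • (1 : Matrix (Fin 8) (Fin 8) ℂ) := by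
  ext i j
  fin_cases i <;> fin_cases j <;>
    simp [X1, mul_apply, Fin.sum_univ_eight, one_apply] <;> field_simp <;> ring

theorem conjTranspose_X1 {α β δ : ℂ} (hδ₀ : δ ≠ 0) (hα : conj α = α⁻¹) (hβ : conj β = -δ ^ 2 / β)
    (hδ : conj δ = -δ) : (X1 α β δ)ᴴ = X1 α (-β) (-δ) := by
  ext i j
  fin_cases i <;> fin_cases j <;> simp [X1, hα, hβ, hδ] <;> field_simp

theorem X1_unitary_general (α β δ lam : ℂ) (hα : α ≠ 0) (hβ : β ≠ 0) (hδ : δ ≠ 0)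
    (hre : δ.re = 0) (hδβ : δ ^ 2 = -((‖β‖ ^ 2 : ℝ) : ℂ))
    (habs : ‖α‖ = 1)
    (hl : ‖lam‖ ^ 2 = 1 / (1 + ‖δ‖ ^ 2)) :
    (lam • X1 α β δ) * (lam • X1 α β δ)ᴴ = (1 : Matrix (Fin 8) (Fin 8) ℂ) := by
  have hα_conj : conj α = α⁻¹ := (Complex.inv_eq_conj habs).symm
  have hβ_conj : conj β = -δ ^ 2 / β := by
    rw [eq_div_iff hβ, mul_comm, Complex.mul_conj', hδβ]
    push_cast
    ring
  have hδ_conj : conj δ = -δ := Complex.ext (by simp [hre]) (by simp)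
  have hδ_sq : 1 - δ ^ 2 = 1 + (‖δ‖ : ℂ) ^ 2 := by
    rw [← Complex.mul_conj', hδ_conj]
    ring
  have hlam : lam * conj lam * (1 - δ ^ 2) = 1 := by
    rw [Complex.mul_conj', hδ_sq]
    exact_mod_cast (by rw [hl]; field_simp : ‖lam‖ ^ 2 * (1 + ‖δ‖ ^ 2) = 1)
  rw [smul_mul_conjTranspose_smul, conjTranspose_X1 hδ hα_conj hβ_conj hδ_conj,
    X1_mul_X1_neg hα hβ hδ, smul_smul, Complex.star_def, hlam, one_smul]

/-- If `Re(δ) = 0`, `δ² = −|β|²`, `|α| = 1` and `|λ|² = 1/(1 + |δ|²)`, then `λ X₁` is a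
unitary matrix. -/
theorem X1_unitary (α β δ lam : ℂ) (hα : α ≠ 0) (hβ : β ≠ 0) (hδ : δ ≠ 0) (hlam : lam ≠ 0)
    (hre : δ.re = 0) (hδβ : δ ^ 2 = -((‖β‖ ^ 2 : ℝ) : ℂ))
    (habs : ‖α‖ = 1)
    (hl : ‖lam‖ ^ 2 = 1 / (1 + ‖δ‖ ^ 2)) :
    (lam • X1 α β δ) * (lam • X1 α β δ)ᴴ = (1 : Matrix (Fin 8) (Fin 8) ℂ) :=
  X1_unitary_general α β δ lam hα hβ hδ hre hδβ habs hl
end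

section
/- The set of complex numbers δ satisfying conj(δ)·(δ² − 2δ + 2) = 1 is exactly {1, 5/4 + (√7/4)i, 5/4 − (√7/4)i}, where conj(δ) denotes the complex conjugate of δ and i is the imaginary unit. -/
/-- The complex numbers `δ` with `conj(δ)·(δ² − 2δ + 2) = 1` are exactly
`1`, `5/4 + (√7/4)i` and `5/4 − (√7/4)i`. -/
theorem conj_cubic_solutions :
    {δ : ℂ | (starRingEnd ℂ) δ * (δ ^ 2 - 2 * δ + 2) = 1} =
      {1, 5 / 4 + (Real.sqrt 7 / 4 : ℝ) * Complex.I,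
        5 / 4 - (Real.sqrt 7 / 4 : ℝ) * Complex.I} := by
  have h7 : Real.sqrt 7 ^ 2 = 7 := Real.sq_sqrt (by norm_num)
  ext δ
  simp only [Set.mem_setOf_eq, Set.mem_insert_iff, Set.mem_singleton_iff]
  constructor
  · intro h
    rw [Complex.ext_iff] at h
    simp only [Complex.mul_re, Complex.mul_im, Complex.conj_re, Complex.conj_im,
      Complex.add_re, Complex.add_im, Complex.sub_re, Complex.sub_im,
      Complex.one_re, Complex.one_im, pow_two] at h
    norm_num at h
    obtain ⟨h1, h2⟩ := h
    have him : δ.im * (δ.re ^ 2 + δ.im ^ 2 - 2) = 0 := by linear_combination h2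
    rcases mul_eq_zero.mp him with hy | hxy
    · left
      have hfac : (δ.re - 1) * ((δ.re - 1/2)^2 + 3/4) = 0 := by
        linear_combination h1 + (2 * δ.im - δ.re * δ.im) * hy
      have hx : δ.re = 1 := by
        have hpos : (δ.re - 1/2)^2 + 3/4 > 0 := by positivity
        rcases mul_eq_zero.mp hfac with h' | h' <;> linarith
      apply Complex.ext <;> simp [hx, hy]
    · have hx : δ.re = 5/4 := by
        linear_combination (h1 - (δ.re - 2) * hxy) / 4
      have hy2 : δ.im ^ 2 = 7/16 := by linear_combination hxy - (δ.re + 5/4) * hx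
      have hfac : (δ.im - Real.sqrt 7 / 4) * (δ.im + Real.sqrt 7 / 4) = 0 := by
        linear_combination hy2 - h7/16
      rcases mul_eq_zero.mp hfac with h' | h'
      · right; left
        apply Complex.ext <;> simp [hx] <;> linarith
      · right; right
        apply Complex.ext <;> simp [hx] <;> linarith
  · rintro (h | h | h) <;> subst h
    · simp
    · rw [Complex.ext_iff]
      constructor <;>
        simp only [Complex.mul_re, Complex.mul_im, Complex.conj_re, Complex.conj_im,
          Complex.add_re, Complex.add_im, Complex.sub_re, Complex.sub_im, Complex.one_re,
          Complex.one_im, Complex.I_re, Complex.I_im, Complex.ofReal_re, Complex.ofReal_im,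
          pow_two] <;> norm_num
      · linear_combination (-3/64 : ℝ) * h7
      · linear_combination (Real.sqrt 7/64) * h7
    · rw [Complex.ext_iff]
      constructor <;>
        simp only [Complex.mul_re, Complex.mul_im, Complex.conj_re, Complex.conj_im,
          Complex.add_re, Complex.add_im, Complex.sub_re, Complex.sub_im, Complex.one_re,
          Complex.one_im, Complex.I_re, Complex.I_im, Complex.ofReal_re, Complex.ofReal_im,
          pow_two] <;> norm_num
      · linear_combination (-3/64 : ℝ) * h7
      · linear_combination (-Real.sqrt 7/64) * h7
end
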